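/- Let X ∈ St(n,p) and let 𝔠 = {C_1,…,C_ℓ} be a partition of [p] with ℓ ≥ 2. Then for every ξ ∈ ℝ^{n×p}: P_{T_X}(A_X(ξ)) = A_X(P_{T_X}(ξ)) = (1/C(ℓ,2)) Σ_{{i,j}} Π_{ij}^X(ξ I_{C_{ij}}) (I_{C_{ij}})ᵀ. Moreover, for every unordered pair {i,j} of distinct indices in [ℓ] and every ξ ∈ ℝ^{n×p}: Π_{ij}^X(A_X(ξ)·I_{C_{ij}}) (I_{C_{ij}})ᵀ = A_X(Π_{ij}^X(ξ I_{C_{ij}}) (I_{C_{ij}})ᵀ). -/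

import Mathlib

/-!
Common definitions for the formalization of results from
"Nonsmooth Optimization over the Stiefel Manifold via a Randomized
Submanifold Subgradient Method" (RSSM).
-/

open Matrix Finset

noncomputable section

namespace RSSM

variable {n p ℓ : ℕ}

/-- Real `n × p` matrices. -/
abbrev Mat (n p : ℕ) := Matrix (Fin n) (Fin p) ℝ

/-- Frobenius inner product `⟨ξ,η⟩ = tr(ξᵀ η)`. -/
def fip (ξ η : Mat n p) : ℝ := (ξᵀ * η).trace

/-- Frobenius norm. -/
def fnorm (ξ : Mat n p) : ℝ := Real.sqrt (fip ξ ξ)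

/-- The Stiefel manifold `St(n,p)`. -/
def Stiefel (n p : ℕ) : Set (Mat n p) := {X | Xᵀ * X = 1}

/-- Column-selection matrix `I_C`. -/
def sel (C : Finset (Fin p)) : Matrix (Fin p) (Fin C.card) ℝ :=
  Matrix.of fun s t => if s = C.orderEmbOfFin rfl t then (1 : ℝ) else 0

/-- Skew-symmetric part. -/
def skewPart {m : ℕ} (A : Matrix (Fin m) (Fin m) ℝ) : Matrix (Fin m) (Fin m) ℝ :=
  (1 / 2 : ℝ) • (A - Aᵀ)

/-- Symmetric part. -/
def symPart {m : ℕ} (A : Matrix (Fin m) (Fin m) ℝ) : Matrix (Fin m) (Fin m) ℝ :=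
  (1 / 2 : ℝ) • (A + Aᵀ)

open Classical in
/-- Inverse of the positive-semidefinite square root (junk value `0` otherwise). -/
def invSqrt {m : ℕ} (S : Matrix (Fin m) (Fin m) ℝ) : Matrix (Fin m) (Fin m) ℝ :=
  if h : S.PosSemidef then
    ((h.1.eigenvectorUnitary : Matrix (Fin m) (Fin m) ℝ) *
      diagonal ((↑) ∘ (fun x : ℝ => Real.sqrt x) ∘ h.1.eigenvalues) *
      (star h.1.eigenvectorUnitary : Matrix (Fin m) (Fin m) ℝ))⁻¹ else 0

/-- Orthogonal projection onto the tangent space `T_X St(n,p)`. -/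
def ptan (X ξ : Mat n p) : Mat n p := ξ - X * symPart (Xᵀ * ξ)

/-- Orthogonal projection `Π` onto the tangent space of the submanifold block at `X_D`. -/
def pblk (X : Mat n p) (D : Finset (Fin p)) (η : Matrix (Fin n) (Fin D.card) ℝ) :
    Matrix (Fin n) (Fin D.card) ℝ :=
  (X * sel D) * skewPart ((X * sel D)ᵀ * η) + (1 - X * Xᵀ) * η

/-- The averaging operator `A_X` (written as an average over ordered pairs of
distinct indices, which equals the average over unordered pairs since each
unordered pair is counted twice). -/
def avg (C : Fin ℓ → Finset (Fin p)) (X ξ : Mat n p) : Mat n p :=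
  ((ℓ : ℝ) * ((ℓ : ℝ) - 1))⁻¹ •
    ∑ q ∈ Finset.univ.offDiag,
      ((1 : Matrix (Fin n) (Fin n) ℝ)
          - (X * sel ((C q.1 ∪ C q.2)ᶜ)) * (X * sel ((C q.1 ∪ C q.2)ᶜ))ᵀ)
        * (ξ * sel (C q.1 ∪ C q.2)) * (sel (C q.1 ∪ C q.2))ᵀ

/-- The averaging operator `A_X` as a linear endomorphism. -/
def avgL (C : Fin ℓ → Finset (Fin p)) (X : Mat n p) : Mat n p →ₗ[ℝ] Mat n p where
  toFun := avg C X
  map_add' := by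
    intro ξ η
    simp [avg, Matrix.add_mul, Matrix.mul_add, Finset.sum_add_distrib, smul_add]
  map_smul' := by
    intro c ξ
    simp only [avg, RingHom.id_apply, Matrix.smul_mul, Matrix.mul_smul, ← Finset.smul_sum]
    rw [smul_comm]

/-- `C(ℓ,2) = ℓ(ℓ-1)/2`. -/
def choose2 (ℓ : ℕ) : ℝ := (ℓ : ℝ) * ((ℓ : ℝ) - 1) / 2

/-- Block Hadamard product `A ⊡ M` with respect to the partition `C`. -/
def bhad (C : Fin ℓ → Finset (Fin p)) (A : Matrix (Fin ℓ) (Fin ℓ) ℝ)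
    (M : Matrix (Fin p) (Fin p) ℝ) : Matrix (Fin p) (Fin p) ℝ :=
  Matrix.of fun s t => (∑ i, ∑ j, if s ∈ C i ∧ t ∈ C j then A i j else 0) * M s t

/-- `Q' = J - ((ℓ-2)/(ℓ-1)) I`. -/
def Qmat (ℓ : ℕ) : Matrix (Fin ℓ) (Fin ℓ) ℝ :=
  Matrix.of fun i j => 1 - (if i = j then ((ℓ : ℝ) - 2) / ((ℓ : ℝ) - 1) else 0)

/-- The all-ones `ℓ × ℓ` matrix `J`. -/
def Jmat (ℓ : ℕ) : Matrix (Fin ℓ) (Fin ℓ) ℝ := Matrix.of fun _ _ => 1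

/-- The operator `B_Z` (the inverse of the averaging operator `A_Z`). -/
def Bop (C : Fin ℓ → Finset (Fin p)) (Z ξ : Mat n p) : Mat n p :=
  Z * (choose2 ℓ • bhad C (Qmat ℓ) (Zᵀ * ξ)) + ((ℓ : ℝ) / 2) • ((1 - Z * Zᵀ) * ξ)

/-- `‖ξ‖²_{A_Z^{-1}} = ⟨B_Z(ξ), ξ⟩`. -/
def anorm2 (C : Fin ℓ → Finset (Fin p)) (Z ξ : Mat n p) : ℝ := fip (Bop C Z ξ) ξ

/-- The RSSM update `U(X, v, γ, {i,j})`: it agrees with `X` on all columns outside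
`C_i ∪ C_j` and performs a retracted partial Riemannian subgradient step there. -/
def update (C : Fin ℓ → Finset (Fin p)) (X v : Mat n p) (γ : ℝ) (i j : Fin ℓ) : Mat n p :=
  X - (X * sel (C i ∪ C j)) * (sel (C i ∪ C j))ᵀ
    + ((X * sel (C i ∪ C j) - γ • pblk X (C i ∪ C j) (v * sel (C i ∪ C j)))
        * invSqrt ((X * sel (C i ∪ C j) - γ • pblk X (C i ∪ C j) (v * sel (C i ∪ C j)))ᵀ
            * (X * sel (C i ∪ C j) - γ • pblk X (C i ∪ C j) (v * sel (C i ∪ C j)))))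
      * (sel (C i ∪ C j))ᵀ

/-- The subdifferential of a `τ`-weakly convex function relative to `Ω`. -/
def subdiff (Ω : Set (Mat n p)) (τ : ℝ) (f : Mat n p → ℝ) (X : Mat n p) :
    Set (Mat n p) :=
  {v | ∀ Y ∈ Ω, f Y ≥ f X + fip v (Y - X) - τ / 2 * (fnorm (Y - X)) ^ 2}

/-- `C` is a partition of `[p]` into nonempty blocks. -/
def IsPartition (C : Fin ℓ → Finset (Fin p)) : Prop :=
  (∀ i, (C i).Nonempty) ∧ (∀ i j, i ≠ j → Disjoint (C i) (C j)) ∧ (∀ s, ∃ i, s ∈ C i)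

/-- The weakly convex Lipschitz setting. -/
structure Setting (n p : ℕ) (f : Mat n p → ℝ) (τ L : ℝ) (Ω : Set (Mat n p)) : Prop where
  tau_nonneg : 0 ≤ τ
  L_pos : 0 < L
  isOpen : IsOpen Ω
  bounded : ∃ R : ℝ, ∀ Y ∈ Ω, fnorm Y ≤ R
  convex : Convex ℝ Ω
  stiefel_subset : Stiefel n p ⊆ Ω
  lipschitz : ∀ X ∈ Ω, ∀ Y ∈ Ω, |f X - f Y| ≤ L * fnorm (X - Y)
  weaklyConvex : ConvexOn ℝ Ω (fun Z => f Z + τ / 2 * (fnorm Z) ^ 2)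

/-- The adaptive proximal objective `Y ↦ f(Y) + (1/(2λ))‖Y-X‖²_{A_X^{-1}}`. -/
def pobj (C : Fin ℓ → Finset (Fin p)) (f : Mat n p → ℝ) (lam : ℝ) (X Y : Mat n p) : ℝ :=
  f Y + 1 / (2 * lam) * anorm2 C X (Y - X)

/-- The adaptive Moreau envelope `f_λ`. -/
def moreau (C : Fin ℓ → Finset (Fin p)) (f : Mat n p → ℝ) (lam : ℝ) (X : Mat n p) : ℝ :=
  sInf ((fun Y => pobj C f lam X Y) '' Stiefel n p)

open Classical in
/-- The adaptive proximal point `Z_X` (defined via choice; under the standing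
hypotheses the minimizer over the Stiefel manifold exists and is unique). -/
def proxPt (C : Fin ℓ → Finset (Fin p)) (f : Mat n p → ℝ) (lam : ℝ) (X : Mat n p) :
    Mat n p :=
  if h : ∃ Z ∈ Stiefel n p, ∀ Y ∈ Stiefel n p, pobj C f lam X Z ≤ pobj C f lam X Y
  then h.choose else X

/-- The surrogate stationarity measure `Θ_λ(X) = (1/λ)‖Z_X - X‖_{A_X^{-1}}`. -/
def Theta (C : Fin ℓ → Finset (Fin p)) (f : Mat n p → ℝ) (lam : ℝ) (X : Mat n p) : ℝ :=
  1 / lam * Real.sqrt (anorm2 C X (proxPt C f lam X - X))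

/-- The type of unordered pairs of distinct indices in `[ℓ]`. -/
def PairT (ℓ : ℕ) := {s : Sym2 (Fin ℓ) // ¬ s.IsDiag}

instance : Fintype (PairT ℓ) := by unfold PairT; infer_instance
instance : DecidableEq (PairT ℓ) := by unfold PairT; infer_instance
instance : MeasurableSpace (PairT ℓ) := ⊤

/-- The RSSM update as a function of an unordered pair of indices. -/
def updateS (C : Fin ℓ → Finset (Fin p)) (X v : Mat n p) (γ : ℝ) (s : Sym2 (Fin ℓ)) :
    Mat n p :=
  Sym2.lift ⟨fun i j => update C X v γ i j, by
    intro i j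
    show update C X v γ i j = update C X v γ j i
    unfold update pblk
    rw [Finset.union_comm (C i) (C j)]⟩ s

/-- The RSSM iterates driven by a sequence `ω` of unordered pairs. -/
def seqIter (C : Fin ℓ → Finset (Fin p)) (V : Mat n p → Mat n p) (X0 : Mat n p)
    (γ : ℕ → ℝ) (ω : ℕ → PairT ℓ) : ℕ → Mat n p
  | 0 => X0
  | k + 1 => updateS C (seqIter C V X0 γ ω k) (V (seqIter C V X0 γ ω k)) (γ k) (ω k).1

/-- The RSSM iterate after `k` steps driven by a finite prefix of unordered pairs. -/
def preIter (C : Fin ℓ → Finset (Fin p)) (V : Mat n p → Mat n p) (X0 : Mat n p)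
    (γ : ℕ → ℝ) : (k : ℕ) → (Fin k → PairT ℓ) → Mat n p
  | 0, _ => X0
  | k + 1, g =>
      updateS C (preIter C V X0 γ k (fun m => g m.castSucc))
        (V (preIter C V X0 γ k (fun m => g m.castSucc))) (γ k) (g (Fin.last k)).1

/-- `E[h(X^k)]`, the average over all prefixes of unordered pairs of length `k`. -/
def Eavg (C : Fin ℓ → Finset (Fin p)) (V : Mat n p → Mat n p) (X0 : Mat n p)
    (γ : ℕ → ℝ) (k : ℕ) (h : Mat n p → ℝ) : ℝ :=
  (1 / (Fintype.card (PairT ℓ) : ℝ)) ^ k * ∑ g : Fin k → PairT ℓ, h (preIter C V X0 γ k g)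


/-! ### Auxiliary material for `avg_commutes_with_projections` -/

/-- Diagonal 0/1 projection matrix with ones on `D`. -/
def Pmat (D : Finset (Fin p)) : Matrix (Fin p) (Fin p) ℝ :=
  Matrix.diagonal (fun s => if s ∈ D then 1 else 0)

lemma sel_mul_selT (D : Finset (Fin p)) : sel D * (sel D)ᵀ = Pmat D := by
  ext s t
  simp only [sel, Pmat, Matrix.mul_apply, Matrix.transpose_apply, Matrix.of_apply,
    Matrix.diagonal_apply]
  by_cases hs : s ∈ D
  · have : s ∈ Set.range (D.orderEmbOfFin rfl) := by
      rw [Finset.range_orderEmbOfFin]; exact hs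
    obtain ⟨u0, hu0⟩ := this
    rw [Finset.sum_eq_single u0]
    · simp [hu0, hs, eq_comm]
    · intro u _ hu
      have : ¬ s = D.orderEmbOfFin rfl u := by
        intro h
        exact hu ((D.orderEmbOfFin rfl).injective (h.symm.trans hu0.symm))
      simp [this]
    · simp
  · have h0 : ∀ u : Fin D.card, ¬ s = D.orderEmbOfFin rfl u := by
      intro u h; exact hs (h ▸ Finset.orderEmbOfFin_mem D rfl u)
    simp [h0, hs]

lemma Pmat_transpose (D : Finset (Fin p)) : (Pmat D)ᵀ = Pmat D := Matrix.diagonal_transpose _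

lemma Pmat_compl (D : Finset (Fin p)) : Pmat Dᶜ = 1 - Pmat D := by
  ext s t
  simp [Pmat, Matrix.diagonal_apply, Matrix.one_apply]
  split_ifs <;> simp_all

lemma Pmat_mul (D E : Finset (Fin p)) : Pmat D * Pmat E = Pmat (D ∩ E) := by
  ext s t
  rw [Pmat, Pmat, Pmat, Matrix.diagonal_mul_diagonal]
  simp only [Matrix.diagonal_apply]
  by_cases h1 : s ∈ D <;> by_cases h2 : s ∈ E <;> split_ifs <;> simp_all

lemma sel_mul_selT_assoc (D : Finset (Fin p)) {m : ℕ} (z : Matrix (Fin p) (Fin m) ℝ) :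
    sel D * ((sel D)ᵀ * z) = Pmat D * z := by rw [← Matrix.mul_assoc, sel_mul_selT]

lemma Pmat_mul_assoc (D E : Finset (Fin p)) {m : ℕ} (z : Matrix (Fin p) (Fin m) ℝ) :
    Pmat D * (Pmat E * z) = Pmat (D ∩ E) * z := by rw [← Matrix.mul_assoc, Pmat_mul]

/-- A single summand of the averaging operator. -/
def Top (X : Mat n p) (D : Finset (Fin p)) (ξ : Mat n p) : Mat n p :=
  ((1 : Matrix (Fin n) (Fin n) ℝ) - (X * sel Dᶜ) * (X * sel Dᶜ)ᵀ) * (ξ * sel D) * (sel D)ᵀ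

/-- The block projection, conjugated back to `n × p` matrices. -/
def Phi (X : Mat n p) (D : Finset (Fin p)) (ξ : Mat n p) : Mat n p :=
  pblk X D (ξ * sel D) * (sel D)ᵀ

lemma XtX_assoc {X : Mat n p} (hX : Xᵀ * X = 1) {m : ℕ} (z : Matrix (Fin p) (Fin m) ℝ) :
    Xᵀ * (X * z) = z := by
  rw [← Matrix.mul_assoc, hX, Matrix.one_mul]

lemma key1 {X ξ : Mat n p} (hX : Xᵀ * X = 1) (D : Finset (Fin p)) :
    ptan X (Top X D ξ) = Top X D (ptan X ξ) := by
  unfold ptan Top symPart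
  simp only [Pmat_compl, Matrix.transpose_mul, Matrix.transpose_sub, Matrix.transpose_smul,
    Matrix.transpose_add, Matrix.transpose_one, Matrix.transpose_transpose, Pmat_transpose,
    Matrix.mul_assoc, Matrix.mul_sub, Matrix.sub_mul, Matrix.mul_add, Matrix.add_mul,
    Matrix.mul_smul, Matrix.smul_mul, smul_add, smul_sub, Matrix.mul_one, Matrix.one_mul,
    sel_mul_selT, sel_mul_selT_assoc, XtX_assoc hX, Pmat_mul, Pmat_mul_assoc,
    Finset.inter_self]
  module

lemma key2 {X ξ : Mat n p} (hX : Xᵀ * X = 1) (D : Finset (Fin p)) :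
    Top X D (ptan X ξ) = Phi X D ξ := by
  unfold ptan Top Phi pblk symPart skewPart
  simp only [Pmat_compl, Matrix.transpose_mul, Matrix.transpose_sub, Matrix.transpose_smul,
    Matrix.transpose_add, Matrix.transpose_one, Matrix.transpose_transpose, Pmat_transpose,
    Matrix.mul_assoc, Matrix.mul_sub, Matrix.sub_mul, Matrix.mul_add, Matrix.add_mul,
    Matrix.mul_smul, Matrix.smul_mul, smul_add, smul_sub, Matrix.mul_one, Matrix.one_mul,
    sel_mul_selT, sel_mul_selT_assoc, XtX_assoc hX, Pmat_mul, Pmat_mul_assoc,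
    Finset.inter_self]
  module

lemma key3 {X ξ : Mat n p} (hX : Xᵀ * X = 1) (D E : Finset (Fin p)) :
    Phi X D (Top X E ξ) = Top X E (Phi X D ξ) := by
  unfold Top Phi pblk skewPart
  simp only [Pmat_compl, Matrix.transpose_mul, Matrix.transpose_sub, Matrix.transpose_smul,
    Matrix.transpose_add, Matrix.transpose_one, Matrix.transpose_transpose, Pmat_transpose,
    Matrix.mul_assoc, Matrix.mul_sub, Matrix.sub_mul, Matrix.mul_add, Matrix.add_mul,
    Matrix.mul_smul, Matrix.smul_mul, smul_add, smul_sub, Matrix.mul_one, Matrix.one_mul,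
    sel_mul_selT, sel_mul_selT_assoc, XtX_assoc hX, Pmat_mul, Pmat_mul_assoc,
    Finset.inter_self, Finset.inter_comm E D]
  module

/-- `ptan X` as a linear map. -/
def ptanL (X : Mat n p) : Mat n p →ₗ[ℝ] Mat n p where
  toFun := ptan X
  map_add' ξ η := by
    simp only [ptan, symPart, Matrix.mul_add, Matrix.add_mul, Matrix.transpose_add, smul_add,
      mul_smul_comm, smul_mul_assoc]
    module
  map_smul' c ξ := by
    simp only [ptan, symPart, RingHom.id_apply, Matrix.mul_add, Matrix.add_mul,
      Matrix.mul_smul, Matrix.smul_mul,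
      Matrix.transpose_smul, smul_sub, smul_add, mul_smul_comm, smul_mul_assoc]
    module

/-- `Phi X D` as a linear map. -/
def PhiL (X : Mat n p) (D : Finset (Fin p)) : Mat n p →ₗ[ℝ] Mat n p where
  toFun := Phi X D
  map_add' ξ η := by
    simp only [Phi, pblk, skewPart, Matrix.mul_add, Matrix.add_mul, Matrix.sub_mul,
      Matrix.mul_sub, Matrix.transpose_add, smul_add, smul_sub, mul_smul_comm, smul_mul_assoc]
    module
  map_smul' c ξ := by
    simp only [Phi, pblk, skewPart, RingHom.id_apply, Matrix.mul_smul, Matrix.smul_mul,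
      Matrix.sub_mul, Matrix.mul_sub, Matrix.add_mul, Matrix.mul_add,
      Matrix.transpose_smul, smul_sub, smul_add, mul_smul_comm, smul_mul_assoc]
    module

/-- Lemma A.1: the averaging operator commutes with the tangent
space projections. -/
theorem avg_commutes_with_projections
    (n p ℓ : ℕ) (hp : 1 ≤ p) (hpn : p ≤ n) (hl : 2 ≤ ℓ)
    (C : Fin ℓ → Finset (Fin p)) (hpart : IsPartition C)
    (X : Mat n p) (hX : X ∈ Stiefel n p) (ξ : Mat n p) :
    ptan X (avg C X ξ) = avg C X (ptan X ξ) ∧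
    avg C X (ptan X ξ)
      = ((ℓ : ℝ) * ((ℓ : ℝ) - 1))⁻¹ •
          ∑ q ∈ Finset.univ.offDiag,
            pblk X (C q.1 ∪ C q.2) (ξ * sel (C q.1 ∪ C q.2)) * (sel (C q.1 ∪ C q.2))ᵀ ∧
    ∀ i j : Fin ℓ, i ≠ j →
      pblk X (C i ∪ C j) (avg C X ξ * sel (C i ∪ C j)) * (sel (C i ∪ C j))ᵀ
        = avg C X (pblk X (C i ∪ C j) (ξ * sel (C i ∪ C j)) * (sel (C i ∪ C j))ᵀ) := by
  have hX' : Xᵀ * X = 1 := hX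
  have e1 : ∀ ζ : Mat n p, avg C X ζ
      = ((ℓ : ℝ) * ((ℓ : ℝ) - 1))⁻¹ •
          ∑ q ∈ Finset.univ.offDiag, Top X (C q.1 ∪ C q.2) ζ := fun ζ => rfl
  refine ⟨?_, ?_, ?_⟩
  · show ptanL X (avg C X ξ) = _
    rw [e1 ξ, _root_.map_smul, map_sum, e1 (ptan X ξ)]
    congr 1
    exact Finset.sum_congr rfl fun q _ => key1 hX' _
  · rw [e1 (ptan X ξ)]
    congr 1
    exact Finset.sum_congr rfl fun q _ => key2 hX' _
  · intro i j hij
    show PhiL X (C i ∪ C j) (avg C X ξ) = avg C X (PhiL X (C i ∪ C j) ξ)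
    rw [e1 ξ, _root_.map_smul, map_sum, e1 (PhiL X (C i ∪ C j) ξ)]
    congr 1
    exact Finset.sum_congr rfl fun q _ => key3 hX' _ _

end RSSM
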